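/- Let C = Φ(𝒞) be a Z2Z4-linear code of binary length n = α+2β, where 𝒞 is a Z2Z4-additive code of type (α,β;γ,δ;κ). Then ker(C) ∈ {γ+δ, γ+δ+1, …, γ+2δ−2} ∪ {γ+2δ}; that is, γ+δ ≤ ker(C) ≤ γ+2δ and ker(C) ≠ γ+2δ−1. -/

import Mathlib

/-- The ambient group `Z2^α × Z4^β`, with componentwise ring structure
(so `u * v` is the componentwise product). -/
abbrev Amb (α β : ℕ) := (Fin α → ZMod 2) × (Fin β → ZMod 4)

/-- The binary space `Z2^α × (Z2²)^β ≅ Z2^(α+2β)`. -/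
abbrev Bin (α β : ℕ) := (Fin α → ZMod 2) × (Fin β → ZMod 2 × ZMod 2)

/-- The Gray map `φ : Z4 → Z2²` with `φ(0)=(0,0), φ(1)=(0,1), φ(2)=(1,1), φ(3)=(1,0)`. -/
def grayPair (y : ZMod 4) : ZMod 2 × ZMod 2 :=
  match y.val with
  | 0 => (0, 0)
  | 1 => (0, 1)
  | 2 => (1, 1)
  | _ => (1, 0)

/-- The extended Gray map `Φ : Z2^α × Z4^β → Z2^(α+2β)`. -/
def Phi {α β : ℕ} (u : Amb α β) : Bin α β :=
  (u.1, fun i => grayPair (u.2 i))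

/-- The kernel `K(C) = {x | x + C = C}` of a binary code. -/
def kernelK {α β : ℕ} (C : Set (Bin α β)) : Set (Bin α β) :=
  {x | (fun y => x + y) '' C = C}

/-- The rank of a binary code: the `Z2`-dimension of its linear span. -/
noncomputable def rankOf {α β : ℕ} (C : Set (Bin α β)) : ℕ :=
  Module.finrank (ZMod 2) (Submodule.span (ZMod 2) C)

/-- The dimension of the kernel of a binary code. -/
noncomputable def kerDim {α β : ℕ} (C : Set (Bin α β)) : ℕ :=
  Module.finrank (ZMod 2) (Submodule.span (ZMod 2) (kernelK C))

/-- A `Z2Z4`-additive code `C ⊆ Z2^α × Z4^β` is of type `(α,β;γ,δ;κ)`: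
`|C| = 2^(γ+2δ)`, the number of elements `x` with `2x = 0` is `2^(γ+δ)`, and `κ` is the
`Z2`-dimension of the projection onto the first `α` coordinates of `{x ∈ C | 2x = 0}`. -/
def IsTypeOf (α β γ δ κ : ℕ) (C : AddSubgroup (Amb α β)) : Prop :=
  Nat.card C = 2 ^ (γ + 2 * δ) ∧
  Nat.card {x : Amb α β | x ∈ C ∧ 2 • x = 0} = 2 ^ (γ + δ) ∧
  Module.finrank (ZMod 2)
    (Submodule.span (ZMod 2) (Prod.fst '' {x : Amb α β | x ∈ C ∧ 2 • x = 0})) = κ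

/-! The kernel of `C = Φ(𝒞)` is the stabilizer `K` of `C` under translations: a subgroup of
`Z2^n` contained in `C` (as `0 ∈ C`), whence `ker(C) ≤ γ+2δ`. The Gray map is additive on the
elements of order at most two of `𝒞`, so their image, of size `2^(γ+δ)`, lies in `K`. Finally `K`
cannot have index two in `C`: otherwise `C = K ∪ (v + K)` for some `v ∉ K`, and as `v + v = 0`,
translation by `v` maps `C` into itself, i.e. `v ∈ K`. -/

open Pointwise AddAction

lemma grayPair_injective : Function.Injective grayPair := by decide

lemma grayPair_add_of_add_self_eq_zero {y : ZMod 4} (hy : y + y = 0) (z : ZMod 4) :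
    grayPair (y + z) = grayPair y + grayPair z := by
  revert y z
  decide

section Gray

variable {α β : ℕ}

lemma Phi_injective : Function.Injective (Phi : Amb α β → Bin α β) := by
  intro u v huv
  simp only [Phi, Prod.mk.injEq] at huv
  exact Prod.ext huv.1 (funext fun i => grayPair_injective (congrFun huv.2 i))

lemma Phi_zero : Phi (0 : Amb α β) = 0 :=
  Prod.ext rfl (funext fun _ => show grayPair 0 = 0 by decide)

lemma Phi_add_of_add_self_eq_zero {x : Amb α β} (hx : x + x = 0) (c : Amb α β) :
    Phi (x + c) = Phi x + Phi c :=
  Prod.ext rfl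
    (funext fun i => grayPair_add_of_add_self_eq_zero (congrFun (congrArg Prod.snd hx) i) _)

end Gray

lemma kernelK_eq_stabilizer {α β : ℕ} (D : Set (Bin α β)) :
    kernelK D = (stabilizer (Bin α β) D : Set (Bin α β)) :=
  rfl

lemma AddSubgroup.natCard_eq_two_pow_finrank_span {V : Type*} [AddCommGroup V]
    [Module (ZMod 2) V] [Finite V] (H : AddSubgroup V) :
    Nat.card H = 2 ^ Module.finrank (ZMod 2) (Submodule.span (ZMod 2) (H : Set V)) := by
  rw [← AddSubgroup.coe_toZModSubmodule 2 H, Submodule.span_eq,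
    Module.natCard_eq_pow_finrank (K := ZMod 2), Nat.card_zmod]
  rfl

section Stabilizer

variable {G : Type*} [AddCommGroup G] {D : Set G}

lemma stabilizer_subset_of_zero_mem (h0 : 0 ∈ D) : (stabilizer G D : Set G) ⊆ D :=
  fun x hx => by simpa using (mem_stabilizer_set.mp hx 0).mpr h0

lemma vadd_stabilizer_subset {v : G} (hv : v ∈ D) : v +ᵥ (stabilizer G D : Set G) ⊆ D := by
  rintro _ ⟨k, hk, rfl⟩
  simpa [add_comm] using (mem_stabilizer_set.mp hk v).mpr hv

lemma disjoint_stabilizer_vadd {v : G} (hv : v ∉ stabilizer G D) :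
    Disjoint (stabilizer G D : Set G) (v +ᵥ (stabilizer G D : Set G)) := by
  refine Set.disjoint_left.mpr ?_
  rintro _ hk ⟨k, hk', rfl⟩
  have hvk : v + k - k ∈ stabilizer G D := (stabilizer G D).sub_mem hk hk'
  rw [add_sub_cancel_right] at hvk
  exact hv hvk

lemma two_mul_card_stabilizer_ne_card [Module (ZMod 2) G] (hD : D.Finite) (h0 : 0 ∈ D) :
    2 * Nat.card (stabilizer G D) ≠ Nat.card D := by
  intro hcard
  set K : Set G := (stabilizer G D : Set G)
  have hKD : K ⊆ D := stabilizer_subset_of_zero_mem h0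
  have hKfin : K.Finite := hD.subset hKD
  have hcardK : 2 * K.ncard = D.ncard := by
    rw [← Nat.card_coe_set_eq, ← Nat.card_coe_set_eq]
    exact hcard
  obtain ⟨v, hvD, hvK⟩ : ∃ v ∈ D, v ∉ K := by
    by_contra! hDK
    have hK0 : 0 < K.ncard := (Set.ncard_pos hKfin).mpr ⟨0, (stabilizer G D).zero_mem⟩
    have := Set.ncard_le_ncard hDK hKfin
    omega
  have hcoset : K ∪ (v +ᵥ K) = D := by
    refine Set.eq_of_subset_of_ncard_le
      (Set.union_subset hKD (vadd_stabilizer_subset hvD)) ?_ hD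
    rw [Set.ncard_union_eq (disjoint_stabilizer_vadd hvK) hKfin hKfin.vadd_set,
      Set.ncard_vadd_set, ← hcardK, two_mul]
  apply hvK
  rw [SetLike.mem_coe, mem_stabilizer_set_iff_vadd_set_subset hD, ← hcoset]
  rintro _ ⟨d, hd | ⟨k, hk, rfl⟩, rfl⟩
  · exact Or.inr ⟨d, hd, rfl⟩
  · left
    simpa [← add_assoc, ZModModule.add_self] using hk

end Stabilizer

lemma Phi_image_twoTorsion_subset_kernelK {α β : ℕ} (C : AddSubgroup (Amb α β)) :
    Phi '' {x : Amb α β | x ∈ C ∧ 2 • x = 0} ⊆ kernelK (Phi '' (C : Set (Amb α β))) := by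
  rintro _ ⟨x, ⟨hxC, hx2⟩, rfl⟩
  rw [kernelK_eq_stabilizer, SetLike.mem_coe,
    mem_stabilizer_set_iff_vadd_set_subset (Set.toFinite _)]
  rintro _ ⟨_, ⟨c, hc, rfl⟩, rfl⟩
  exact ⟨x + c, C.add_mem hxC hc, Phi_add_of_add_self_eq_zero (two_nsmul x ▸ hx2) c⟩

/-- `ker(C) ∈ {γ+δ, …, γ+2δ−2} ∪ {γ+2δ}`. -/
theorem kernel_dim_range (α β γ δ κ : ℕ) (C : AddSubgroup (Amb α β))
    (h : IsTypeOf α β γ δ κ C) :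
    γ + δ ≤ kerDim (Phi '' (C : Set (Amb α β))) ∧
      (kerDim (Phi '' (C : Set (Amb α β))) + 2 ≤ γ + 2 * δ ∨
        kerDim (Phi '' (C : Set (Amb α β))) = γ + 2 * δ) := by
  obtain ⟨hcardC, hcardTorsion, -⟩ := h
  set D : Set (Bin α β) := Phi '' (C : Set (Amb α β))
  have h0 : (0 : Bin α β) ∈ D := ⟨0, C.zero_mem, Phi_zero⟩
  have hD : Nat.card D = 2 ^ (γ + 2 * δ) := by
    rw [Nat.card_image_of_injective Phi_injective]
    exact hcardC
  have hK : Nat.card (stabilizer (Bin α β) D) = 2 ^ kerDim D :=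
    AddSubgroup.natCard_eq_two_pow_finrank_span _
  have hlower : 2 ^ (γ + δ) ≤ 2 ^ kerDim D := by
    rw [← hcardTorsion, ← Nat.card_image_of_injective Phi_injective, ← hK]
    exact Nat.card_mono (Set.toFinite _) (Phi_image_twoTorsion_subset_kernelK C)
  have hupper : 2 ^ kerDim D ≤ 2 ^ (γ + 2 * δ) := by
    rw [← hK, ← hD]
    exact Nat.card_mono (Set.toFinite _) (stabilizer_subset_of_zero_mem h0)
  have hgap : kerDim D + 1 ≠ γ + 2 * δ := fun heq =>
    two_mul_card_stabilizer_ne_card (Set.toFinite _) h0 (by rw [hK, hD, ← pow_succ', heq])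
  rw [Nat.pow_le_pow_iff_right (by norm_num)] at hlower hupper
  omega
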